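/- arXiv:1303.4081 — 4 statements merged into one kernel-verified Lean document; each statement's English description precedes it below -/
import Mathlib

section
/- Let f : {0,1}ⁿ → {0,1} and g : {0,1}ⁿ × {0,1}ᵐ → {0,1} be Boolean functions such that every satisfying assignment of g projected to the first n coordinates satisfies f, and every satisfying assignment of f extends to a satisfying assignment of g. Then the function g' obtained from g by setting all of the last m inputs to true within a monotone combination is, in general, not equal to f; however, if g is computed by a decomposable negation normal form circuit D, then the circuit D' obtained from D by replacing every literal of the last m variables with the constant true computes exactly the projection of g to the first n variables; that is, an assignment a ∈ {0,1}ⁿ satisfies D' if and only if there exists b ∈ {0,1}ᵐ with g(a,b) = 1. -/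
/-- Negation normal form circuits: constants, literals, AND, OR. -/
inductive NNF (V : Type) where
  | tru : NNF V
  | fls : NNF V
  | lit (v : V) (b : Bool) : NNF V
  | and (l r : NNF V) : NNF V
  | or (l r : NNF V) : NNF V

def NNF.eval {V : Type} (a : V → Bool) : NNF V → Bool
  | .tru => true
  | .fls => false
  | .lit v b => a v == b
  | .and l r => l.eval a && r.eval a
  | .or l r => l.eval a || r.eval a

def NNF.vars {V : Type} [DecidableEq V] : NNF V → Finset V
  | .tru => ∅
  | .fls => ∅
  | .lit v _ => {v}
  | .and l r => l.vars ∪ r.vars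
  | .or l r => l.vars ∪ r.vars

/-- Decomposability: the inputs of every AND gate have disjoint variable sets. -/
def NNF.Decomposable {V : Type} [DecidableEq V] : NNF V → Prop
  | .and l r => Disjoint l.vars r.vars ∧ l.Decomposable ∧ r.Decomposable
  | .or l r => l.Decomposable ∧ r.Decomposable
  | _ => True

/-- Replace every literal of the last `m` variables by the constant `true`. -/
def NNF.forget {n m : ℕ} : NNF (Fin n ⊕ Fin m) → NNF (Fin n ⊕ Fin m)
  | .tru => .tru
  | .fls => .fls
  | .lit (Sum.inl i) b => .lit (Sum.inl i) b
  | .lit (Sum.inr _) _ => .tru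
  | .and l r => .and l.forget r.forget
  | .or l r => .or l.forget r.forget

/-!
Replacing the literals of the last `m` variables by `true` can only turn gates true, so every
`(a, b)` satisfying `D` gives a satisfying input of `D.forget`, whose value does not depend on `b`
at all. Conversely, induct on `D`: a forgotten literal is satisfied by choosing its variable
appropriately, and at an AND gate the witnesses for the two inputs can be glued because, by
decomposability, they constrain disjoint sets of variables.
-/

namespace NNF

section General

variable {V : Type} [DecidableEq V]

theorem eval_congr {D : NNF V} {c c' : V → Bool} (h : ∀ v ∈ D.vars, c v = c' v) :
    D.eval c = D.eval c' := by
  induction D with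
  | tru | fls => rfl
  | lit v b => simp [eval, h v (by simp [vars])]
  | and l r ihl ihr | or l r ihl ihr =>
    simp only [eval]
    rw [ihl fun v hv => h v (by simp [vars, hv]), ihr fun v hv => h v (by simp [vars, hv])]

theorem eval_and_glue {l r : NNF V} (h : Disjoint l.vars r.vars) (c₁ c₂ : V → Bool) :
    (l.and r).eval (fun v => if v ∈ l.vars then c₁ v else c₂ v) = (l.eval c₁ && r.eval c₂) := by
  have hl : l.eval (fun v => if v ∈ l.vars then c₁ v else c₂ v) = l.eval c₁ :=
    eval_congr fun v hv => if_pos hv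
  have hr : r.eval (fun v => if v ∈ l.vars then c₁ v else c₂ v) = r.eval c₂ :=
    eval_congr fun v hv => if_neg (Finset.disjoint_right.mp h hv)
  rw [eval, hl, hr]

end General

variable {n m : ℕ}

theorem inr_notMem_vars_forget (D : NNF (Fin n ⊕ Fin m)) (j : Fin m) :
    Sum.inr j ∉ D.forget.vars := by
  induction D with
  | tru | fls => simp [forget, vars]
  | lit v b => cases v <;> simp [forget, vars]
  | and l r ihl ihr | or l r ihl ihr => simp [forget, vars, ihl, ihr]

theorem eval_forget_sum_elim_congr_right (D : NNF (Fin n ⊕ Fin m)) (a : Fin n → Bool)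
    (b b' : Fin m → Bool) :
    D.forget.eval (Sum.elim a b) = D.forget.eval (Sum.elim a b') :=
  eval_congr fun v hv => by
    cases v with
    | inl i => rfl
    | inr j => exact absurd hv (inr_notMem_vars_forget D j)

theorem eval_forget_of_eval {D : NNF (Fin n ⊕ Fin m)} {c : Fin n ⊕ Fin m → Bool}
    (h : D.eval c = true) : D.forget.eval c = true := by
  induction D with
  | tru | fls => exact h
  | lit v b => cases v <;> first | exact h | rfl
  | and l r ihl ihr =>
    simp only [eval, forget, Bool.and_eq_true] at h ⊢
    exact ⟨ihl h.1, ihr h.2⟩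
  | or l r ihl ihr =>
    simp only [eval, forget, Bool.or_eq_true] at h ⊢
    exact h.imp ihl ihr

theorem exists_eval_of_eval_forget {D : NNF (Fin n ⊕ Fin m)} (hD : D.Decomposable)
    {a : Fin n → Bool} {b₀ : Fin m → Bool} (h : D.forget.eval (Sum.elim a b₀) = true) :
    ∃ b : Fin m → Bool, D.eval (Sum.elim a b) = true := by
  induction D with
  | tru | fls => exact ⟨b₀, h⟩
  | lit v b =>
    cases v with
    | inl i => exact ⟨b₀, h⟩
    | inr j => exact ⟨fun _ => b, by simp [eval]⟩
  | and l r ihl ihr =>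
    obtain ⟨hdisj, hl, hr⟩ := hD
    simp only [forget, eval, Bool.and_eq_true] at h
    obtain ⟨b₁, hb₁⟩ := ihl hl h.1
    obtain ⟨b₂, hb₂⟩ := ihr hr h.2
    refine ⟨fun j => if Sum.inr j ∈ l.vars then b₁ j else b₂ j, ?_⟩
    have hglue : Sum.elim a (fun j => if Sum.inr j ∈ l.vars then b₁ j else b₂ j) =
        fun v => if v ∈ l.vars then Sum.elim a b₁ v else Sum.elim a b₂ v := by
      funext v
      cases v <;> simp
    rw [hglue, eval_and_glue hdisj, hb₁, hb₂, Bool.and_self]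
  | or l r ihl ihr =>
    obtain ⟨hl, hr⟩ := hD
    simp only [forget, eval, Bool.or_eq_true] at h ⊢
    rcases h with h | h
    · exact (ihl hl h).imp fun _ => Or.inl
    · exact (ihr hr h).imp fun _ => Or.inr

end NNF

/-- If a DNNF `D` computes `g : {0,1}ⁿ × {0,1}ᵐ → {0,1}`, then replacing every
literal of the last `m` variables by the constant `true` yields a circuit
computing exactly the projection of `g` to the first `n` variables: an
assignment `a` satisfies `D.forget` iff some `b` makes `g (a, b) = 1`. -/
theorem dnnf_projection {n m : ℕ} (D : NNF (Fin n ⊕ Fin m))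
    (hD : D.Decomposable) (a : Fin n → Bool) (b₀ : Fin m → Bool) :
    D.forget.eval (Sum.elim a b₀) = true ↔
      ∃ b : Fin m → Bool, D.eval (Sum.elim a b) = true := by
  refine ⟨NNF.exists_eval_of_eval_forget hD, ?_⟩
  rintro ⟨b, hb⟩
  rw [NNF.eval_forget_sum_elim_congr_right D a b₀ b]
  exact NNF.eval_forget_of_eval hb
end

section
/- Any clique decomposition of width k of a graph G can be converted into a simplified clique decomposition of G of width at most 2k; hence the simplified cliquewidth of any graph is at most twice its cliquewidth. -/
/-- A simplified clique decomposition (scd), presented as the term generating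
the final labeled graph: leaves introduce single vertices with a singleton
label, binary nodes take disjoint unions, and unary nodes add a new vertex,
unite two labels, or add all edges (arcs) between two labels. -/
inductive SCD (V : Type) where
  | leaf (v : V) : SCD V
  | union (l r : SCD V) : SCD V
  | addVertex (t : SCD V) (v : V) : SCD V
  | unite (t : SCD V) (S₁ S₂ : Finset V) : SCD V
  | addAdj (t : SCD V) (S₁ S₂ : Finset V) : SCD V

variable {V : Type} [DecidableEq V]

/-- The vertex set of the labeled graph produced by an scd. -/
def SCD.verts : SCD V → Finset V
  | .leaf v => {v}
  | .union l r => l.verts ∪ r.verts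
  | .addVertex t v => t.verts ∪ {v}
  | .unite t _ _ => t.verts
  | .addAdj t _ _ => t.verts

/-- The set of labels (the partition of the vertices) of the graph produced. -/
def SCD.labels : SCD V → Finset (Finset V)
  | .leaf v => {{v}}
  | .union l r => l.labels ∪ r.labels
  | .addVertex t v => t.labels ∪ {{v}}
  | .unite t S₁ S₂ => (t.labels \ {S₁, S₂}) ∪ {S₁ ∪ S₂}
  | .addAdj t _ _ => t.labels

/-- Well-formedness of an scd: unions are of vertex-disjoint graphs, added
vertices are new, and the unite/new-adjacency operations are applied to two
distinct existing labels. -/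
def SCD.WF : SCD V → Prop
  | .leaf _ => True
  | .union l r => l.WF ∧ r.WF ∧ Disjoint l.verts r.verts
  | .addVertex t v => t.WF ∧ v ∉ t.verts
  | .unite t S₁ S₂ => t.WF ∧ S₁ ∈ t.labels ∧ S₂ ∈ t.labels ∧ S₁ ≠ S₂
  | .addAdj t S₁ S₂ => t.WF ∧ S₁ ∈ t.labels ∧ S₂ ∈ t.labels ∧ S₁ ≠ S₂

/-- The set 𝐒(T,𝐆) of all labels appearing at any node of the decomposition. -/
def SCD.allLabels : SCD V → Finset (Finset V)
  | .leaf v => {{v}}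
  | .union l r => l.allLabels ∪ r.allLabels
  | .addVertex t v => t.allLabels ∪ {{v}}
  | .unite t S₁ S₂ => t.allLabels ∪ {S₁ ∪ S₂}
  | .addAdj t _ _ => t.allLabels

/-- The (symmetrized) edge set of the graph produced by an scd. -/
def SCD.edges : SCD V → Finset (V × V)
  | .leaf _ => ∅
  | .union l r => l.edges ∪ r.edges
  | .addVertex t _ => t.edges
  | .unite t _ _ => t.edges
  | .addAdj t S₁ S₂ => t.edges ∪ (S₁ ×ˢ S₂ ∪ S₂ ×ˢ S₁)

/-- The width of an scd: the maximum number of labels of any graph `G(t)`. -/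
def SCD.width : SCD V → ℕ
  | .leaf _ => 1
  | .union l r => max (max l.width r.width) ((l.labels ∪ r.labels).card)
  | .addVertex t v => max t.width ((t.labels ∪ {{v}}).card)
  | .unite t S₁ S₂ => max t.width (((t.labels \ {S₁, S₂}) ∪ {S₁ ∪ S₂}).card)
  | .addAdj t _ _ => t.width

/-- A clique decomposition via numerically labeled graphs: introduce a vertex
with label `i`, add all edges between labels `i` and `j`, relabel `i` to `j`,
and disjoint union. -/
inductive CW (V : Type) where
  | intro (v : V) (i : ℕ) : CW V
  | addEdges (t : CW V) (i j : ℕ) : CW V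
  | relabel (t : CW V) (i j : ℕ) : CW V
  | union (l r : CW V) : CW V

def CW.verts : CW V → Finset V
  | .intro v _ => {v}
  | .addEdges t _ _ => t.verts
  | .relabel t _ _ => t.verts
  | .union l r => l.verts ∪ r.verts

/-- The numeric label of each vertex of the graph produced (0 by default). -/
def CW.lab : CW V → V → ℕ
  | .intro v i => fun u => if u = v then i else 0
  | .addEdges t _ _ => t.lab
  | .relabel t i j => fun u => if t.lab u = i then j else t.lab u
  | .union l r => fun u => if u ∈ l.verts then l.lab u else r.lab u

/-- The (symmetrized) edge set of the graph produced by a clique decomposition. -/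
def CW.edges : CW V → Finset (V × V)
  | .intro _ _ => ∅
  | .addEdges t i j => t.edges ∪
      ((t.verts ×ˢ t.verts).filter (fun p => p.1 ≠ p.2 ∧
        ((t.lab p.1 = i ∧ t.lab p.2 = j) ∨ (t.lab p.1 = j ∧ t.lab p.2 = i))))
  | .relabel t _ _ => t.edges
  | .union l r => l.edges ∪ r.edges

/-- The set of numeric label values used by the clique decomposition. -/
def CW.used : CW V → Finset ℕ
  | .intro _ i => {i}
  | .addEdges t i j => t.used ∪ {i, j}
  | .relabel t i j => t.used ∪ {i, j}
  | .union l r => l.used ∪ r.used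

def CW.WF : CW V → Prop
  | .intro _ _ => True
  | .addEdges t i j => t.WF ∧ i ≠ j
  | .relabel t i j => t.WF ∧ i ≠ j
  | .union l r => l.WF ∧ r.WF ∧ Disjoint l.verts r.verts


namespace CWAux
variable {V : Type} [DecidableEq V]

/-- The class of vertices with numeric label `i`. -/
def CW.cls (T : CW V) (i : ℕ) : Finset V := T.verts.filter (fun v => T.lab v = i)

open CW (cls)

lemma cls_subset (T : CW V) (i : ℕ) : cls T i ⊆ T.verts := Finset.filter_subset _ _

lemma mem_cls {T : CW V} {i : ℕ} {v : V} : v ∈ cls T i ↔ v ∈ T.verts ∧ T.lab v = i := by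
  simp [cls]

lemma cls_disjoint (T : CW V) {i j : ℕ} (h : i ≠ j) : Disjoint (cls T i) (cls T j) := by
  simp only [Finset.disjoint_left, mem_cls]
  rintro a ⟨_, h1⟩ ⟨_, h2⟩
  exact h (h1 ▸ h2)

lemma cls_ne {T : CW V} {i j : ℕ} (h : i ≠ j) (hne : (cls T i).Nonempty) :
    cls T i ≠ cls T j := by
  intro he
  have hd := he ▸ cls_disjoint T h
  rw [disjoint_self, Finset.bot_eq_empty] at hd
  exact hne.ne_empty (he.trans hd)

lemma lab_mem_used (T : CW V) {v : V} (hv : v ∈ T.verts) : T.lab v ∈ T.used := by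
  induction T with
  | intro w i => simp [CW.verts] at hv; simp [CW.lab, CW.used, hv]
  | addEdges t i j ih =>
      simp only [CW.verts] at hv
      simp only [CW.lab, CW.used, Finset.mem_union]
      exact Or.inl (ih hv)
  | relabel t i j ih =>
      simp only [CW.verts] at hv
      simp only [CW.lab, CW.used, Finset.mem_union, Finset.mem_insert, Finset.mem_singleton]
      split
      · simp
      · exact Or.inl (ih hv)
  | union l r ihl ihr =>
      simp only [CW.verts, Finset.mem_union] at hv
      simp only [CW.lab, CW.used, Finset.mem_union]
      split
      next h => exact Or.inl (ihl h)
      next h =>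
        rcases hv with h' | h'
        · exact absurd h' h
        · exact Or.inr (ihr h')

lemma mem_used_of_nonempty {T : CW V} {i : ℕ} (h : (cls T i).Nonempty) : i ∈ T.used := by
  obtain ⟨v, hv⟩ := h
  rw [mem_cls] at hv
  exact hv.2 ▸ lab_mem_used T hv.1

end CWAux
namespace CWAux
variable {V : Type} [DecidableEq V]
open CW (cls)

lemma cls_addEdges (t : CW V) (i j m : ℕ) : cls (CW.addEdges t i j) m = cls t m := rfl

lemma cls_relabel (t : CW V) {i j : ℕ} (h : i ≠ j) (m : ℕ) :
    cls (CW.relabel t i j) m =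
      if m = j then cls t i ∪ cls t j else if m = i then ∅ else cls t m := by
  ext v
  by_cases hm : m = j
  · subst hm
    by_cases hl : t.lab v = i <;>
      simp [mem_cls, CW.verts, CW.lab, hl, h, Ne.symm h]
  · by_cases hmi : m = i
    · by_cases hl : t.lab v = i <;>
        simp [mem_cls, CW.verts, CW.lab, hl, hm, hmi, Ne.symm hm, h, Ne.symm h]
    · by_cases hl : t.lab v = i <;>
        simp [mem_cls, CW.verts, CW.lab, hl, hm, hmi, Ne.symm hm, Ne.symm hmi]

end CWAux
namespace CWAux
variable {V : Type} [DecidableEq V]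
open CW (cls)

lemma cls_union (l r : CW V) (hd : Disjoint l.verts r.verts) (m : ℕ) :
    cls (CW.union l r) m = cls l m ∪ cls r m := by
  ext v
  simp only [mem_cls, CW.verts, CW.lab, Finset.mem_union]
  by_cases hv : v ∈ l.verts
  · have hvr : v ∉ r.verts := Finset.disjoint_left.mp hd hv
    simp [hv, hvr]
  · simp [hv]

lemma edges_addEdges (t : CW V) {i j : ℕ} (h : i ≠ j) :
    (CW.addEdges t i j).edges = t.edges ∪ (cls t i ×ˢ cls t j ∪ cls t j ×ˢ cls t i) := by
  show t.edges ∪ _ = _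
  congr 1
  ext ⟨a, b⟩
  simp only [Finset.mem_filter, Finset.mem_product, Finset.mem_union, mem_cls]
  constructor
  · rintro ⟨⟨ha, hb⟩, -, (⟨h1, h2⟩ | ⟨h1, h2⟩)⟩
    · exact Or.inl ⟨⟨ha, h1⟩, hb, h2⟩
    · exact Or.inr ⟨⟨ha, h1⟩, hb, h2⟩
  · rintro (⟨⟨ha, h1⟩, hb, h2⟩ | ⟨⟨ha, h1⟩, hb, h2⟩)
    · exact ⟨⟨ha, hb⟩, fun he => h (by subst he; rw [← h1, h2]), Or.inl ⟨h1, h2⟩⟩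
    · exact ⟨⟨ha, hb⟩, fun he => h (by subst he; rw [← h2, h1]), Or.inr ⟨h1, h2⟩⟩

end CWAux
namespace CWAux
variable {V : Type} [DecidableEq V]
open CW (cls)

/-- The indices of nonempty classes. -/
def N (T : CW V) : Finset ℕ := T.used.filter (fun i => (cls T i).Nonempty)

/-- The partition into label classes. -/
def Lab (T : CW V) : Finset (Finset V) := (N T).image (cls T)

lemma mem_N {T : CW V} {i : ℕ} : i ∈ N T ↔ (cls T i).Nonempty := by
  simp only [N, Finset.mem_filter, and_iff_right_iff_imp]
  exact fun h => mem_used_of_nonempty h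

lemma mem_Lab {T : CW V} {S : Finset V} :
    S ∈ Lab T ↔ S.Nonempty ∧ ∃ i, cls T i = S := by
  simp only [Lab, Finset.mem_image, mem_N]
  constructor
  · rintro ⟨i, hi, rfl⟩
    exact ⟨hi, i, rfl⟩
  · rintro ⟨hS, i, rfl⟩
    exact ⟨i, hS, rfl⟩

lemma card_Lab_le (T : CW V) : (Lab T).card ≤ T.used.card :=
  le_trans (Finset.card_image_le) (Finset.card_filter_le _ _)

lemma used_nonempty (T : CW V) : T.used.Nonempty := by
  induction T with
  | intro v i => exact ⟨i, by simp [CW.used]⟩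
  | addEdges t i j ih => exact ih.mono (by intro x hx; simp [CW.used]; tauto)
  | relabel t i j ih => exact ih.mono (by intro x hx; simp [CW.used]; tauto)
  | union l r ihl ihr => exact ihl.mono (by simp [CW.used, Finset.subset_union_left])

lemma ne_of_subset_disjoint {s t A B : Finset V} (hs : s.Nonempty) (hsA : s ⊆ A)
    (htB : t ⊆ B) (hd : Disjoint A B) : s ≠ t := by
  rintro rfl
  obtain ⟨v, hv⟩ := hs
  exact Finset.disjoint_left.mp hd (hsA hv) (htB hv)

end CWAux
namespace CWAux
variable {V : Type} [DecidableEq V]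
open CW (cls)

lemma card_Lab_le_N (T : CW V) : (Lab T).card ≤ (N T).card := Finset.card_image_le

lemma merge (l r : CW V) (hd : Disjoint l.verts r.verts)
    (l' r' : SCD V) (hlW : l'.WF) (hrW : r'.WF)
    (hlv : l'.verts = l.verts) (hrv : r'.verts = r.verts)
    (hle : l'.edges = l.edges) (hre : r'.edges = r.edges)
    (hll : l'.labels = Lab l) (hrl : r'.labels = Lab r) :
    ∃ T'' : SCD V, T''.WF ∧ T''.verts = l.verts ∪ r.verts ∧
      T''.edges = l.edges ∪ r.edges ∧ T''.labels = Lab (CW.union l r) ∧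
      T''.width ≤ max (max l'.width r'.width) ((N l).card + (N r).card) := by
  have key : ∀ J : Finset ℕ, J ⊆ N l ∩ N r → ∃ T'' : SCD V, T''.WF ∧
      T''.verts = l.verts ∪ r.verts ∧ T''.edges = l.edges ∪ r.edges ∧
      T''.labels = (N l \ J).image (cls l) ∪ (N r \ J).image (cls r) ∪
        J.image (fun i => cls l i ∪ cls r i) ∧
      T''.width ≤ max (max l'.width r'.width) ((N l).card + (N r).card) := by
    intro J
    induction J using Finset.induction_on with
    | empty =>
        intro _
        refine ⟨SCD.union l' r', ⟨hlW, hrW, by rw [hlv, hrv]; exact hd⟩, ?_, ?_, ?_, ?_⟩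
        · show l'.verts ∪ r'.verts = _
          rw [hlv, hrv]
        · show l'.edges ∪ r'.edges = _
          rw [hle, hre]
        · show l'.labels ∪ r'.labels = _
          rw [hll, hrl]
          simp [Lab]
        · show max (max l'.width r'.width) (l'.labels ∪ r'.labels).card ≤ _
          refine max_le (le_max_left _ _) (le_trans ?_ (le_max_right _ _))
          rw [hll, hrl]
          exact le_trans (Finset.card_union_le _ _)
            (Nat.add_le_add (card_Lab_le_N l) (card_Lab_le_N r))
    | @insert a J ha ih =>
        intro hsub
        have haM : a ∈ N l ∩ N r := hsub (Finset.mem_insert_self a J)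
        have hJM : J ⊆ N l ∩ N r := fun x hx => hsub (Finset.mem_insert_of_mem hx)
        obtain ⟨T₀, hW, hv, he, hlab, hw⟩ := ih hJM
        have haL : a ∈ N l := (Finset.mem_inter.mp haM).1
        have haR : a ∈ N r := (Finset.mem_inter.mp haM).2
        have hneL : (cls l a).Nonempty := mem_N.mp haL
        have hneR : (cls r a).Nonempty := mem_N.mp haR
        have hmemL : cls l a ∈ T₀.labels := by
          rw [hlab]
          refine Finset.mem_union_left _ (Finset.mem_union_left _ ?_)
          exact Finset.mem_image_of_mem _ (Finset.mem_sdiff.mpr ⟨haL, ha⟩)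
        have hmemR : cls r a ∈ T₀.labels := by
          rw [hlab]
          refine Finset.mem_union_left _ (Finset.mem_union_right _ ?_)
          exact Finset.mem_image_of_mem _ (Finset.mem_sdiff.mpr ⟨haR, ha⟩)
        have hne : cls l a ≠ cls r a :=
          ne_of_subset_disjoint hneL (cls_subset l a) (cls_subset r a) hd
        have hA : (N l \ J).image (cls l) \ {cls l a, cls r a}
            = (N l \ insert a J).image (cls l) := by
          ext S
          simp only [Finset.mem_sdiff, Finset.mem_image, Finset.mem_insert,
            Finset.mem_singleton, not_or]
          constructor
          · rintro ⟨⟨m, ⟨hmN, hmJ⟩, rfl⟩, hne1, hne2⟩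
            exact ⟨m, ⟨hmN, fun h => hne1 (by rw [h]), hmJ⟩, rfl⟩
          · rintro ⟨m, ⟨hmN, hma, hmJ⟩, rfl⟩
            refine ⟨⟨m, ⟨hmN, hmJ⟩, rfl⟩, ?_, ?_⟩
            · exact cls_ne hma (mem_N.mp hmN)
            · exact ne_of_subset_disjoint (mem_N.mp hmN) (cls_subset l m)
                (cls_subset r a) hd
        have hB : (N r \ J).image (cls r) \ {cls l a, cls r a}
            = (N r \ insert a J).image (cls r) := by
          ext S
          simp only [Finset.mem_sdiff, Finset.mem_image, Finset.mem_insert,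
            Finset.mem_singleton, not_or]
          constructor
          · rintro ⟨⟨m, ⟨hmN, hmJ⟩, rfl⟩, hne1, hne2⟩
            exact ⟨m, ⟨hmN, fun h => hne2 (by rw [h]), hmJ⟩, rfl⟩
          · rintro ⟨m, ⟨hmN, hma, hmJ⟩, rfl⟩
            refine ⟨⟨m, ⟨hmN, hmJ⟩, rfl⟩, ?_, ?_⟩
            · exact ne_of_subset_disjoint (mem_N.mp hmN) (cls_subset r m)
                (cls_subset l a) hd.symm
            · exact cls_ne hma (mem_N.mp hmN)
        have hCne1 : ∀ m ∈ J, cls l m ∪ cls r m ≠ cls l a := by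
          intro m hm heq
          obtain ⟨v, hv⟩ := mem_N.mp (Finset.mem_inter.mp (hJM hm)).2
          have hvl : v ∈ cls l a := heq ▸ Finset.mem_union_right _ hv
          exact Finset.disjoint_left.mp hd (cls_subset l a hvl) (cls_subset r m hv)
        have hCne2 : ∀ m ∈ J, cls l m ∪ cls r m ≠ cls r a := by
          intro m hm heq
          obtain ⟨v, hv⟩ := mem_N.mp (Finset.mem_inter.mp (hJM hm)).1
          have hvr : v ∈ cls r a := heq ▸ Finset.mem_union_left _ hv
          exact Finset.disjoint_left.mp hd (cls_subset l m hv) (cls_subset r a hvr)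
        have hC : J.image (fun i => cls l i ∪ cls r i) \ {cls l a, cls r a}
            = J.image (fun i => cls l i ∪ cls r i) := by
          ext S
          simp only [Finset.mem_sdiff, Finset.mem_image, Finset.mem_insert,
            Finset.mem_singleton, not_or]
          constructor
          · rintro ⟨h, -⟩
            exact h
          · rintro ⟨m, hm, rfl⟩
            exact ⟨⟨m, hm, rfl⟩, hCne1 m hm, hCne2 m hm⟩
        have hL : (T₀.labels \ {cls l a, cls r a}) ∪ {cls l a ∪ cls r a}
            = (N l \ insert a J).image (cls l) ∪ (N r \ insert a J).image (cls r) ∪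
              (insert a J).image (fun i => cls l i ∪ cls r i) := by
          rw [hlab, Finset.union_sdiff_distrib, Finset.union_sdiff_distrib, hA, hB, hC,
            Finset.image_insert]
          ext S
          simp only [Finset.mem_union, Finset.mem_insert, Finset.mem_singleton]
          tauto
        have hIL : insert a J ⊆ N l := fun x hx => (Finset.mem_inter.mp (hsub hx)).1
        have hIR : insert a J ⊆ N r := fun x hx => (Finset.mem_inter.mp (hsub hx)).2
        have hcard : ((N l \ insert a J).image (cls l) ∪
            (N r \ insert a J).image (cls r) ∪
            (insert a J).image (fun i => cls l i ∪ cls r i)).card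
            ≤ (N l).card + (N r).card := by
          have h1 := Finset.card_union_le
            ((N l \ insert a J).image (cls l) ∪ (N r \ insert a J).image (cls r))
            ((insert a J).image (fun i => cls l i ∪ cls r i))
          have h2 := Finset.card_union_le ((N l \ insert a J).image (cls l))
            ((N r \ insert a J).image (cls r))
          have h3 : ((N l \ insert a J).image (cls l)).card ≤ (N l).card - (insert a J).card := by
            rw [← Finset.card_sdiff_of_subset hIL]
            exact Finset.card_image_le
          have h4 : ((N r \ insert a J).image (cls r)).card ≤ (N r).card - (insert a J).card := by
            rw [← Finset.card_sdiff_of_subset hIR]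
            exact Finset.card_image_le
          have h5 : ((insert a J).image (fun i => cls l i ∪ cls r i)).card
              ≤ (insert a J).card := Finset.card_image_le
          have h6 : (insert a J).card ≤ (N l).card := Finset.card_le_card hIL
          omega
        refine ⟨SCD.unite T₀ (cls l a) (cls r a), ⟨hW, hmemL, hmemR, hne⟩, hv, he, ?_, ?_⟩
        · show (T₀.labels \ {cls l a, cls r a}) ∪ {cls l a ∪ cls r a} = _
          exact hL
        · show max T₀.width ((T₀.labels \ {cls l a, cls r a}) ∪ {cls l a ∪ cls r a}).card ≤ _
          refine max_le hw ?_
          rw [hL]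
          exact le_trans hcard (le_max_right _ _)
  obtain ⟨T'', hW, hv, he, hlab, hw⟩ := key (N l ∩ N r) (subset_refl _)
  refine ⟨T'', hW, hv, he, ?_, hw⟩
  rw [hlab]
  ext S
  simp only [Finset.mem_union, Finset.mem_image, Finset.mem_sdiff, Finset.mem_inter,
    mem_Lab, mem_N]
  constructor
  · rintro ((⟨m, ⟨hmN, hmM⟩, rfl⟩ | ⟨m, ⟨hmN, hmM⟩, rfl⟩) | ⟨m, ⟨hmL, hmR⟩, rfl⟩)
    · have hre : cls r m = ∅ := by
        by_contra hne'
        exact hmM ⟨hmN, Finset.nonempty_iff_ne_empty.mpr hne'⟩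
      refine ⟨hmN, m, ?_⟩
      rw [cls_union l r hd, hre, Finset.union_empty]
    · have hle : cls l m = ∅ := by
        by_contra hne'
        exact hmM ⟨Finset.nonempty_iff_ne_empty.mpr hne', hmN⟩
      refine ⟨hmN, m, ?_⟩
      rw [cls_union l r hd, hle, Finset.empty_union]
    · exact ⟨hmL.mono Finset.subset_union_left, m, cls_union l r hd m⟩
  · rintro ⟨hS, m, rfl⟩
    rw [cls_union l r hd] at hS ⊢
    by_cases hl1 : (cls l m).Nonempty <;> by_cases hr1 : (cls r m).Nonempty
    · exact Or.inr ⟨m, ⟨hl1, hr1⟩, rfl⟩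
    · have : cls r m = ∅ := Finset.not_nonempty_iff_eq_empty.mp hr1
      refine Or.inl (Or.inl ⟨m, ⟨hl1, fun hm => hr1 hm.2⟩, ?_⟩)
      rw [this, Finset.union_empty]
    · have : cls l m = ∅ := Finset.not_nonempty_iff_eq_empty.mp hl1
      refine Or.inl (Or.inr ⟨m, ⟨hr1, fun hm => hl1 hm.1⟩, ?_⟩)
      rw [this, Finset.empty_union]
    · exfalso
      rw [Finset.not_nonempty_iff_eq_empty.mp hl1,
        Finset.not_nonempty_iff_eq_empty.mp hr1, Finset.union_empty] at hS
      exact hS.ne_empty rfl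

end CWAux
namespace CWAux
variable {V : Type} [DecidableEq V]
open CW (cls)

lemma key (T : CW V) (hWF : T.WF) :
    ∃ T' : SCD V, T'.WF ∧ T'.verts = T.verts ∧ T'.edges = T.edges ∧
      T'.labels = Lab T ∧ T'.width ≤ 2 * T.used.card := by
  induction T with
  | intro v i =>
      refine ⟨SCD.leaf v, trivial, rfl, rfl, ?_, ?_⟩
      · show ({{v}} : Finset (Finset V)) = _
        ext S
        rw [mem_Lab]
        simp only [Finset.mem_singleton]
        constructor
        · rintro rfl
          refine ⟨⟨v, Finset.mem_singleton_self v⟩, i, ?_⟩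
          ext u
          simp only [mem_cls, CW.verts, CW.lab, Finset.mem_singleton]
          constructor
          · rintro ⟨rfl, -⟩; rfl
          · rintro rfl; simp
        · rintro ⟨hS, m, rfl⟩
          obtain ⟨u, hu⟩ := hS
          rw [mem_cls] at hu
          have huv : u = v := by simpa [CW.verts] using hu.1
          subst huv
          have hmi : m = i := by simpa [CW.lab] using hu.2.symm
          subst hmi
          ext w
          simp only [mem_cls, CW.verts, CW.lab, Finset.mem_singleton]
          constructor
          · rintro ⟨rfl, -⟩; rfl
          · rintro rfl; simp
      · show (1 : ℕ) ≤ 2 * ({i} : Finset ℕ).card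
        simp
  | addEdges t i j ih =>
      obtain ⟨h1, h2⟩ := hWF
      obtain ⟨t', w1, w2, w3, w4, w5⟩ := ih h1
      have hLabEq : Lab (CW.addEdges t i j) = Lab t := by
        ext S
        rw [mem_Lab, mem_Lab]
        simp only [cls_addEdges]
      have hwid : 2 * t.used.card ≤ 2 * (CW.addEdges t i j).used.card := by
        apply Nat.mul_le_mul_left
        exact Finset.card_le_card (by show t.used ⊆ t.used ∪ {i, j}; exact Finset.subset_union_left)
      by_cases hne : (cls t i).Nonempty ∧ (cls t j).Nonempty
      · refine ⟨SCD.addAdj t' (cls t i) (cls t j),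
          ⟨w1, ?_, ?_, cls_ne h2 hne.1⟩, w2, ?_, ?_, le_trans w5 hwid⟩
        · rw [w4]; exact mem_Lab.mpr ⟨hne.1, i, rfl⟩
        · rw [w4]; exact mem_Lab.mpr ⟨hne.2, j, rfl⟩
        · show t'.edges ∪ _ = _
          rw [edges_addEdges t h2, w3]
        · show t'.labels = _
          rw [w4, hLabEq]
      · have hX : (cls t i ×ˢ cls t j ∪ cls t j ×ˢ cls t i : Finset (V × V)) = ∅ := by
          rw [not_and_or] at hne
          rcases hne with h | h <;>
            rw [Finset.not_nonempty_iff_eq_empty] at h <;> simp [h]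
        refine ⟨t', w1, w2, ?_, ?_, le_trans w5 hwid⟩
        · rw [edges_addEdges t h2, hX, Finset.union_empty]
          exact w3
        · rw [w4, hLabEq]
  | relabel t i j ih =>
      obtain ⟨h1, h2⟩ := hWF
      obtain ⟨t', w1, w2, w3, w4, w5⟩ := ih h1
      have hwid : 2 * t.used.card ≤ 2 * (CW.relabel t i j).used.card := by
        apply Nat.mul_le_mul_left
        exact Finset.card_le_card (by show t.used ⊆ t.used ∪ {i, j}; exact Finset.subset_union_left)
      by_cases hi : (cls t i).Nonempty
      · by_cases hj : (cls t j).Nonempty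
        · -- both nonempty: unite
          refine ⟨SCD.unite t' (cls t i) (cls t j),
            ⟨w1, by rw [w4]; exact mem_Lab.mpr ⟨hi, i, rfl⟩,
              by rw [w4]; exact mem_Lab.mpr ⟨hj, j, rfl⟩, cls_ne h2 hi⟩, w2, w3, ?_, ?_⟩
          · show (t'.labels \ {cls t i, cls t j}) ∪ {cls t i ∪ cls t j} = _
            rw [w4]
            ext S
            simp only [Finset.mem_union, Finset.mem_sdiff, Finset.mem_insert,
              Finset.mem_singleton, not_or, mem_Lab]
            constructor
            · rintro (⟨⟨hS, m, rfl⟩, hne1, hne2⟩ | rfl)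
              · have hmi : m ≠ i := fun h => hne1 (by rw [h])
                have hmj : m ≠ j := fun h => hne2 (by rw [h])
                exact ⟨hS, m, by rw [cls_relabel t h2 m, if_neg hmj, if_neg hmi]⟩
              · exact ⟨hi.mono Finset.subset_union_left, j,
                  by rw [cls_relabel t h2 j, if_pos rfl]⟩
            · rintro ⟨hS, m, rfl⟩
              rw [cls_relabel t h2 m] at hS ⊢
              by_cases hmj : m = j
              · rw [if_pos hmj]
                exact Or.inr rfl
              · rw [if_neg hmj] at hS ⊢
                by_cases hmi : m = i
                · rw [if_pos hmi] at hS
                  exact absurd rfl hS.ne_empty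
                · rw [if_neg hmi] at hS ⊢
                  exact Or.inl ⟨⟨hS, m, rfl⟩, cls_ne hmi hS, cls_ne hmj hS⟩
          · show max t'.width ((t'.labels \ {cls t i, cls t j}) ∪ {cls t i ∪ cls t j}).card ≤ _
            have c1 : ((t'.labels \ {cls t i, cls t j}) ∪ {cls t i ∪ cls t j}).card
                ≤ t'.labels.card + 1 := by
              refine le_trans (Finset.card_union_le _ _) ?_
              have : (t'.labels \ {cls t i, cls t j}).card ≤ t'.labels.card :=
                Finset.card_le_card Finset.sdiff_subset
              simp only [Finset.card_singleton]
              omega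
            have c2 : t'.labels.card ≤ t.used.card := by
              rw [w4]; exact card_Lab_le t
            have c3 : 1 ≤ t.used.card := Finset.card_pos.mpr (used_nonempty t)
            exact max_le (le_trans w5 hwid) (by
              show _ ≤ 2 * (t.used ∪ {i, j}).card
              have c4 : t.used.card ≤ (t.used ∪ {i, j}).card :=
                Finset.card_le_card Finset.subset_union_left
              omega)
        · -- cls t j empty
          refine ⟨t', w1, w2, w3, ?_, le_trans w5 hwid⟩
          rw [w4]
          ext S
          rw [mem_Lab, mem_Lab]
          have hje : cls t j = ∅ := Finset.not_nonempty_iff_eq_empty.mp hj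
          constructor
          · rintro ⟨hS, m, rfl⟩
            by_cases hmi : m = i
            · refine ⟨hS, j, ?_⟩
              rw [cls_relabel t h2 j, if_pos rfl, hje, Finset.union_empty, hmi]
            · by_cases hmj : m = j
              · rw [hmj, hje] at hS
                exact absurd rfl hS.ne_empty
              · exact ⟨hS, m, by rw [cls_relabel t h2 m, if_neg hmj, if_neg hmi]⟩
          · rintro ⟨hS, m, rfl⟩
            rw [cls_relabel t h2 m] at hS ⊢
            by_cases hmj : m = j
            · rw [if_pos hmj] at hS ⊢
              exact ⟨hS, i, by rw [hje, Finset.union_empty]⟩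
            · rw [if_neg hmj] at hS ⊢
              by_cases hmi : m = i
              · rw [if_pos hmi] at hS
                exact absurd rfl hS.ne_empty
              · rw [if_neg hmi] at hS ⊢
                exact ⟨hS, m, rfl⟩
      · -- cls t i empty
        refine ⟨t', w1, w2, w3, ?_, le_trans w5 hwid⟩
        rw [w4]
        ext S
        rw [mem_Lab, mem_Lab]
        have hie : cls t i = ∅ := Finset.not_nonempty_iff_eq_empty.mp hi
        constructor
        · rintro ⟨hS, m, rfl⟩
          by_cases hmj : m = j
          · refine ⟨hS, j, ?_⟩
            rw [cls_relabel t h2 j, if_pos rfl, hie, Finset.empty_union, hmj]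
          · by_cases hmi : m = i
            · rw [hmi, hie] at hS
              exact absurd rfl hS.ne_empty
            · exact ⟨hS, m, by rw [cls_relabel t h2 m, if_neg hmj, if_neg hmi]⟩
        · rintro ⟨hS, m, rfl⟩
          rw [cls_relabel t h2 m] at hS ⊢
          by_cases hmj : m = j
          · rw [if_pos hmj] at hS ⊢
            rw [hie, Finset.empty_union] at hS ⊢
            exact ⟨hS, j, rfl⟩
          · rw [if_neg hmj] at hS ⊢
            by_cases hmi : m = i
            · rw [if_pos hmi] at hS
              exact absurd rfl hS.ne_empty
            · rw [if_neg hmi] at hS ⊢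
              exact ⟨hS, m, rfl⟩
  | union l r ihl ihr =>
      obtain ⟨h1, h2, hd⟩ := hWF
      obtain ⟨l', a1, a2, a3, a4, a5⟩ := ihl h1
      obtain ⟨r', b1, b2, b3, b4, b5⟩ := ihr h2
      obtain ⟨T'', hW, hv, he, hlab, hw⟩ :=
        merge l r hd l' r' a1 b1 a2 b2 a3 b3 a4 b4
      refine ⟨T'', hW, hv, he, hlab, ?_⟩
      show _ ≤ 2 * (l.used ∪ r.used).card
      have d1 : l.used.card ≤ (l.used ∪ r.used).card :=
        Finset.card_le_card Finset.subset_union_left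
      have d2 : r.used.card ≤ (l.used ∪ r.used).card :=
        Finset.card_le_card Finset.subset_union_right
      have d3 : (N l).card ≤ l.used.card := Finset.card_filter_le _ _
      have d4 : (N r).card ≤ r.used.card := Finset.card_filter_le _ _
      exact le_trans hw (max_le (max_le (by omega) (by omega)) (by omega))

end CWAux

/-- Any clique decomposition of width `k` of a graph can be converted into a
simplified clique decomposition of the same graph of width at most `2k`; hence
the simplified cliquewidth of any graph is at most twice its cliquewidth. -/
theorem scw_le_two_mul_cw (T : CW V) (hWF : T.WF) (k : ℕ)
    (hk : T.used.card ≤ k) :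
    ∃ T' : SCD V, T'.WF ∧ T'.verts = T.verts ∧ T'.edges = T.edges ∧
      T'.width ≤ 2 * k := by
  obtain ⟨T', w1, w2, w3, _, w5⟩ := CWAux.key T hWF
  exact ⟨T', w1, w2, w3, le_trans w5 (Nat.mul_le_mul_left 2 hk)⟩
end

section
/- Let (T,𝐆) be a simplified clique decomposition of a directed graph of width k, and let H be its representation graph. Then the treewidth of H is at most k. -/
variable {V : Type} [DecidableEq V]

/-- `T.isChild S₁ S₂`: the label `S₂` was created by uniting `S₁` with another
label somewhere in the decomposition (so `S₁` is a child of `S₂`). -/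
def SCD.isChild : SCD V → Finset V → Finset V → Prop
  | .leaf _ => fun _ _ => False
  | .union l r => fun A B => l.isChild A B ∨ r.isChild A B
  | .addVertex t _ => t.isChild
  | .unite t S₁ S₂ => fun A B => t.isChild A B ∨ ((A = S₁ ∨ A = S₂) ∧ B = S₁ ∪ S₂)
  | .addAdj t _ _ => t.isChild

/-- `T.isAdjArc S₁ S₂`: the new-adjacency operation was applied somewhere in the
decomposition, introducing all arcs from the label `S₁` to the label `S₂`. -/
def SCD.isAdjArc : SCD V → Finset V → Finset V → Prop
  | .leaf _ => fun _ _ => False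
  | .union l r => fun A B => l.isAdjArc A B ∨ r.isAdjArc A B
  | .addVertex t _ => t.isAdjArc
  | .unite t _ _ => t.isAdjArc
  | .addAdj t S₁ S₂ => fun A B => t.isAdjArc A B ∨ (A = S₁ ∧ B = S₂)

/-- Adjacency in the representation graph `H` of the scd: two distinct labels
are adjacent iff one is a child of the other or the new-adjacency operation was
applied to the pair. -/
def repAdj (T : SCD V) (A B : Finset V) : Prop :=
  A ≠ B ∧ (T.isChild A B ∨ T.isChild B A ∨ T.isAdjArc A B ∨ T.isAdjArc B A)

/-!
Build the tree decomposition along the scd term. Every operation that creates a label becomes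
a new tree node whose bag is the set of labels present just before it together with the labels
it creates; the node is attached to the root node(s) of its operand(s). A new-adjacency
operation needs no node: both of its labels already lie in the root bag. Since labels stay
pairwise disjoint and every label ever used lies inside a current one, a created label occurs
in no earlier bag, so gluing preserves the connectedness of the bags containing a label. Each
bag has at most `width + 1` elements.
-/

namespace SimpleGraph

variable {α ι ι' ι₁ ι₂ : Type*}

def RunningIntersection (G : SimpleGraph ι) (bag : ι → Finset α) : Prop :=
  ∀ a, (G.induce {i | a ∈ bag i}).Preconnected

theorem RunningIntersection.reachable_map {G : SimpleGraph ι} {G' : SimpleGraph ι'}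
    {bag : ι → Finset α} {bag' : ι' → Finset α} (h : G.RunningIntersection bag) (φ : G →g G')
    (hbag : ∀ i, bag i ⊆ bag' (φ i)) ⦃a : α⦄ ⦃i j : ι⦄ (hi : a ∈ bag i) (hj : a ∈ bag j) :
    (G'.induce {k | a ∈ bag' k}).Reachable ⟨φ i, hbag i hi⟩ ⟨φ j, hbag j hj⟩ :=
  (h a ⟨i, hi⟩ ⟨j, hj⟩).map (induceHom φ fun k hk => hbag k hk)

theorem RunningIntersection.map_equiv {G : SimpleGraph ι} {bag : ι → Finset α}
    (h : G.RunningIntersection bag) (e : ι ≃ ι') :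
    (G.map e.toEmbedding).RunningIntersection (bag ∘ e.symm) := by
  rintro a ⟨u, hu⟩ ⟨v, hv⟩
  simpa [Iso.map_apply] using h.reachable_map (Iso.map e G).toHom
    (bag' := bag ∘ e.symm) (fun i => (congrArg bag (e.symm_apply_apply i)).ge) hu hv

theorem IsTree.sum_sup_edge [Finite ι₁] [Finite ι₂] {G₁ : SimpleGraph ι₁} {G₂ : SimpleGraph ι₂}
    (h₁ : G₁.IsTree) (h₂ : G₂.IsTree) (r₁ : ι₁) (r₂ : ι₂) :
    ((G₁ ⊕g G₂) ⊔ edge (Sum.inl r₁) (Sum.inr r₂)).IsTree := by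
  rw [isTree_iff_connected_and_card] at *
  refine ⟨h₁.1.sum_sup_edge h₂.1, ?_⟩
  have hnew : s(Sum.inl r₁, Sum.inr r₂) ∉ (G₁ ⊕g G₂).edgeSet :=
    not_adj_sum_inl_inr (G := G₁) (H := G₂) r₁ r₂
  rw [edgeSet_sup, edgeSet_edge_of_ne Sum.inl_ne_inr, Set.union_singleton,
    Nat.card_coe_set_eq, Set.ncard_insert_of_notMem hnew, ← Nat.card_coe_set_eq,
    Nat.card_congr edgeSetSumEquiv, Nat.card_sum, Nat.card_sum]
  omega

theorem RunningIntersection.sum_sup_edge {G₁ : SimpleGraph ι₁} {G₂ : SimpleGraph ι₂}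
    {bag₁ : ι₁ → Finset α} {bag₂ : ι₂ → Finset α} (h₁ : G₁.RunningIntersection bag₁)
    (h₂ : G₂.RunningIntersection bag₂) {r₁ : ι₁} {r₂ : ι₂}
    (hshared : ∀ a i j, a ∈ bag₁ i → a ∈ bag₂ j → a ∈ bag₁ r₁ ∧ a ∈ bag₂ r₂) :
    ((G₁ ⊕g G₂) ⊔ edge (Sum.inl r₁) (Sum.inr r₂)).RunningIntersection (Sum.elim bag₁ bag₂) := by
  set G := (G₁ ⊕g G₂) ⊔ edge (Sum.inl r₁) (Sum.inr r₂)
  have reach₁ := h₁.reachable_map (bag' := Sum.elim bag₁ bag₂)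
    ((Hom.ofLE le_sup_left).comp Embedding.sumInl.toHom : G₁ →g G) fun _ => subset_rfl
  have reach₂ := h₂.reachable_map (bag' := Sum.elim bag₁ bag₂)
    ((Hom.ofLE le_sup_left).comp Embedding.sumInr.toHom : G₂ →g G) fun _ => subset_rfl
  have cross : ∀ a i j (hi : a ∈ bag₁ i) (hj : a ∈ bag₂ j),
      (G.induce {k | a ∈ Sum.elim bag₁ bag₂ k}).Reachable ⟨.inl i, hi⟩ ⟨.inr j, hj⟩ := by
    intro a i j hi hj
    obtain ⟨hr₁, hr₂⟩ := hshared a i j hi hj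
    have hroots : (G.induce {k | a ∈ Sum.elim bag₁ bag₂ k}).Adj ⟨.inl r₁, hr₁⟩ ⟨.inr r₂, hr₂⟩ :=
      Or.inr (by simp [edge])
    exact (reach₁ hi hr₁).trans (hroots.reachable.trans (reach₂ hr₂ hj))
  rintro a ⟨i | i, hi⟩ ⟨j | j, hj⟩
  · exact reach₁ hi hj
  · exact cross a i j hi hj
  · exact (cross a j i hj hi).symm
  · exact reach₂ hi hj

end SimpleGraph

open SimpleGraph

structure RootedTreeDecomposition (α ι : Type*) where
  graph : SimpleGraph ι
  bag : ι → Finset α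
  root : ι
  isTree : graph.IsTree
  runningIntersection : graph.RunningIntersection bag

namespace RootedTreeDecomposition

variable {α ι ι₁ ι₂ : Type*} {R : α → α → Prop}

def single (s : Finset α) : RootedTreeDecomposition α Unit where
  graph := ⊥
  bag _ := s
  root := ()
  isTree := .of_subsingleton
  runningIntersection _ u v := Subsingleton.elim u v ▸ .rfl

def glue [Finite ι₁] [Finite ι₂] (D₁ : RootedTreeDecomposition α ι₁)
    (D₂ : RootedTreeDecomposition α ι₂)
    (hshared : ∀ a i j, a ∈ D₁.bag i → a ∈ D₂.bag j → a ∈ D₁.bag D₁.root ∧ a ∈ D₂.bag D₂.root) :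
    RootedTreeDecomposition α (ι₁ ⊕ ι₂) where
  graph := (D₁.graph ⊕g D₂.graph) ⊔ edge (.inl D₁.root) (.inr D₂.root)
  bag := Sum.elim D₁.bag D₂.bag
  root := .inl D₁.root
  isTree := D₁.isTree.sum_sup_edge D₂.isTree _ _
  runningIntersection := D₁.runningIntersection.sum_sup_edge D₂.runningIntersection hshared

def extend [Finite ι] (D : RootedTreeDecomposition α ι) (s : Finset α)
    (hs : ∀ a ∈ s, ∀ i, a ∈ D.bag i → a ∈ D.bag D.root) :
    RootedTreeDecomposition α (Unit ⊕ ι) :=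
  (single s).glue D fun a _ i ha hi => ⟨ha, hs a ha i hi⟩

def congr (D : RootedTreeDecomposition α ι) (e : ι ≃ ι₁) : RootedTreeDecomposition α ι₁ where
  graph := D.graph.map e.toEmbedding
  bag := D.bag ∘ e.symm
  root := e D.root
  isTree := (Iso.map e D.graph).isTree_iff.mp D.isTree
  runningIntersection := D.runningIntersection.map_equiv e

@[simp] theorem congr_bag_apply (D : RootedTreeDecomposition α ι) (e : ι ≃ ι₁) (i : ι₁) :
    (D.congr e).bag i = D.bag (e.symm i) := rfl

def Covers (D : RootedTreeDecomposition α ι) (R : α → α → Prop) : Prop :=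
  ∀ a b, R a b → ∃ i, a ∈ D.bag i ∧ b ∈ D.bag i

theorem Covers.congr {D : RootedTreeDecomposition α ι} (h : D.Covers R)
    (e : ι ≃ ι₁) : (D.congr e).Covers R := fun a b hab =>
  let ⟨i, hi⟩ := h a b hab; ⟨e i, by simpa using hi⟩

theorem Covers.flip {D : RootedTreeDecomposition α ι} (h : D.Covers R) :
    D.Covers (flip R) := fun a b hab =>
  let ⟨i, hb, ha⟩ := h b a hab; ⟨i, ha, hb⟩

theorem Covers.glue_left [Finite ι₁] [Finite ι₂] {D₁ : RootedTreeDecomposition α ι₁}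
    {D₂ : RootedTreeDecomposition α ι₂} (h : D₁.Covers R) (hshared) :
    (D₁.glue D₂ hshared).Covers R := fun a b hab =>
  let ⟨i, hi⟩ := h a b hab; ⟨.inl i, hi⟩

theorem Covers.glue_right [Finite ι₁] [Finite ι₂] {D₁ : RootedTreeDecomposition α ι₁}
    {D₂ : RootedTreeDecomposition α ι₂} (h : D₂.Covers R) (hshared) :
    (D₁.glue D₂ hshared).Covers R := fun a b hab =>
  let ⟨i, hi⟩ := h a b hab; ⟨.inr i, hi⟩

end RootedTreeDecomposition

namespace SCD

open Finset RootedTreeDecomposition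

variable {T t l r : SCD V} {S A B S₁ S₂ : Finset V} {v : V}

theorem labels_subset_allLabels : ∀ T : SCD V, T.labels ⊆ T.allLabels
  | .leaf _ => subset_rfl
  | .union l r => union_subset_union l.labels_subset_allLabels r.labels_subset_allLabels
  | .addVertex t _ => union_subset_union t.labels_subset_allLabels subset_rfl
  | .unite t _ _ => union_subset_union (sdiff_subset.trans t.labels_subset_allLabels) subset_rfl
  | .addAdj t _ _ => t.labels_subset_allLabels

theorem card_labels_le_width : ∀ T : SCD V, #T.labels ≤ T.width
  | .leaf _ => by simp [labels, width]
  | .union _ _ => le_max_right _ _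
  | .addVertex _ _ => le_max_right _ _
  | .unite _ _ _ => le_max_right _ _
  | .addAdj t _ _ => t.card_labels_le_width

theorem exists_mem_labels_superset (hS : S ∈ T.allLabels) : ∃ L ∈ T.labels, S ⊆ L := by
  induction T with
  | leaf v => exact ⟨S, hS, subset_rfl⟩
  | union l r ihl ihr =>
    rcases mem_union.mp hS with hS | hS
    · obtain ⟨L, hL, hSL⟩ := ihl hS
      exact ⟨L, mem_union_left _ hL, hSL⟩
    · obtain ⟨L, hL, hSL⟩ := ihr hS
      exact ⟨L, mem_union_right _ hL, hSL⟩
  | addVertex t v ih =>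
    rcases mem_union.mp hS with hS | hS
    · obtain ⟨L, hL, hSL⟩ := ih hS
      exact ⟨L, mem_union_left _ hL, hSL⟩
    · exact ⟨S, mem_union_right _ hS, subset_rfl⟩
  | unite t S₁ S₂ ih =>
    have hnew : S₁ ∪ S₂ ∈ (t.unite S₁ S₂).labels := mem_union_right _ (mem_singleton_self _)
    rcases mem_union.mp hS with hS | hS
    · obtain ⟨L, hL, hSL⟩ := ih hS
      by_cases hL₁₂ : L = S₁ ∨ L = S₂
      · refine ⟨S₁ ∪ S₂, hnew, hSL.trans ?_⟩
        rcases hL₁₂ with rfl | rfl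
        exacts [subset_union_left, subset_union_right]
      · exact ⟨L, mem_union_left _ (by simpa [hL] using hL₁₂), hSL⟩
    · exact ⟨S, (mem_singleton.mp hS) ▸ hnew, subset_rfl⟩
  | addAdj t _ _ ih => exact ih hS

theorem WF.nonempty_of_mem_allLabels (hT : T.WF) (hS : S ∈ T.allLabels) : S.Nonempty := by
  induction T generalizing S with
  | leaf v => simp_all [allLabels]
  | union l r ihl ihr => exact (mem_union.mp hS).elim (ihl hT.1) (ihr hT.2.1)
  | addVertex t v ih =>
    rcases mem_union.mp hS with hS | hS
    · exact ih hT.1 hS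
    · simp_all
  | unite t S₁ S₂ ih =>
    rcases mem_union.mp hS with hS | hS
    · exact ih hT.1 hS
    · rw [mem_singleton.mp hS]
      exact (ih hT.1 (t.labels_subset_allLabels hT.2.1)).mono subset_union_left
  | addAdj t _ _ ih => exact ih hT.1 hS

theorem WF.subset_verts_of_mem_allLabels (hT : T.WF) (hS : S ∈ T.allLabels) : S ⊆ T.verts := by
  induction T generalizing S with
  | leaf v => simp_all [allLabels, verts]
  | union l r ihl ihr =>
    rcases mem_union.mp hS with hS | hS
    exacts [(ihl hT.1 hS).trans subset_union_left, (ihr hT.2.1 hS).trans subset_union_right]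
  | addVertex t v ih =>
    rcases mem_union.mp hS with hS | hS
    · exact (ih hT.1 hS).trans subset_union_left
    · simp_all [verts]
  | unite t S₁ S₂ ih =>
    rcases mem_union.mp hS with hS | hS
    · exact ih hT.1 hS
    · rw [mem_singleton.mp hS]
      exact union_subset (ih hT.1 (t.labels_subset_allLabels hT.2.1))
        (ih hT.1 (t.labels_subset_allLabels hT.2.2.1))
  | addAdj t _ _ ih => exact ih hT.1 hS

theorem WF.subset_verts_of_mem_labels (hT : T.WF) (hS : S ∈ T.labels) : S ⊆ T.verts :=
  hT.subset_verts_of_mem_allLabels (T.labels_subset_allLabels hS)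

theorem WF.disjoint_of_mem_labels (hT : T.WF) (hA : A ∈ T.labels) (hB : B ∈ T.labels)
    (hAB : A ≠ B) : Disjoint A B := by
  induction T generalizing A B with
  | leaf v => simp_all [labels]
  | union l r ihl ihr =>
    obtain ⟨hl, hr, hlr⟩ := hT
    rcases mem_union.mp hA with hA | hA <;> rcases mem_union.mp hB with hB | hB
    · exact ihl hl hA hB hAB
    · exact hlr.mono (hl.subset_verts_of_mem_labels hA) (hr.subset_verts_of_mem_labels hB)
    · exact hlr.symm.mono (hr.subset_verts_of_mem_labels hA) (hl.subset_verts_of_mem_labels hB)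
    · exact ihr hr hA hB hAB
  | addVertex t v ih =>
    have hfresh {X} (hX : X ∈ t.labels) : Disjoint X {v} :=
      disjoint_singleton_right.mpr fun hv =>
        hT.2 (hT.1.subset_verts_of_mem_labels hX hv)
    rcases mem_union.mp hA with hA | hA <;> rcases mem_union.mp hB with hB | hB
    · exact ih hT.1 hA hB hAB
    · exact (mem_singleton.mp hB) ▸ hfresh hA
    · exact (mem_singleton.mp hA) ▸ (hfresh hB).symm
    · exact absurd ((mem_singleton.mp hA).trans (mem_singleton.mp hB).symm) hAB
  | unite t S₁ S₂ ih =>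
    obtain ⟨ht, h₁, h₂, -⟩ := hT
    have hold {X} (hX : X ∈ t.labels \ {S₁, S₂}) : Disjoint X (S₁ ∪ S₂) := by
      simp only [mem_sdiff, mem_insert, mem_singleton, not_or] at hX
      exact disjoint_union_right.mpr ⟨ih ht hX.1 h₁ hX.2.1, ih ht hX.1 h₂ hX.2.2⟩
    rcases mem_union.mp hA with hA | hA <;> rcases mem_union.mp hB with hB | hB
    · exact ih ht (mem_sdiff.mp hA).1 (mem_sdiff.mp hB).1 hAB
    · exact (mem_singleton.mp hB) ▸ hold hA
    · exact (mem_singleton.mp hA) ▸ (hold hB).symm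
    · exact absurd ((mem_singleton.mp hA).trans (mem_singleton.mp hB).symm) hAB
  | addAdj t _ _ ih => exact ih hT.1 hA hB hAB

theorem WF.eq_of_mem_labels_of_subset (hT : T.WF) (hA : A ∈ T.labels) (hB : B ∈ T.labels)
    (hAB : A ⊆ B) : A = B := by
  by_contra hne
  have hA_ne := hT.nonempty_of_mem_allLabels (T.labels_subset_allLabels hA)
  exact hA_ne.ne_empty (disjoint_self.mp ((hT.disjoint_of_mem_labels hA hB hne).mono_right hAB))

theorem WF.union_notMem_allLabels (ht : t.WF) (h₁ : S₁ ∈ t.labels) (h₂ : S₂ ∈ t.labels)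
    (h₁₂ : S₁ ≠ S₂) : S₁ ∪ S₂ ∉ t.allLabels := fun hmem =>
  let ⟨_, hL, hsub⟩ := exists_mem_labels_superset hmem
  h₁₂ <| (ht.eq_of_mem_labels_of_subset h₁ hL (subset_union_left.trans hsub)).trans
    (ht.eq_of_mem_labels_of_subset h₂ hL (subset_union_right.trans hsub)).symm

theorem WF.disjoint_allLabels (hl : l.WF) (hr : r.WF) (hlr : Disjoint l.verts r.verts) :
    Disjoint l.allLabels r.allLabels :=
  disjoint_left.mpr fun _ h₁ h₂ => (hl.nonempty_of_mem_allLabels h₁).ne_empty <|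
    disjoint_self.mp <|
      hlr.mono (hl.subset_verts_of_mem_allLabels h₁) (hr.subset_verts_of_mem_allLabels h₂)

/-- The induction invariant: `D` is a tree decomposition of the representation graph of `T` of
width at most `T.width`, and the root bag holds the current labels, so that the node of a further
operation can be attached at the root. -/
structure IsDecomposition {ι : Type*} (T : SCD V) (D : RootedTreeDecomposition (Finset V) ι) :
    Prop where
  labels_subset_bag_root : T.labels ⊆ D.bag D.root
  bag_subset_allLabels : ∀ i, D.bag i ⊆ T.allLabels
  exists_mem_bag : ∀ S ∈ T.allLabels, ∃ i, S ∈ D.bag i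
  covers_isChild : D.Covers T.isChild
  covers_isAdjArc : D.Covers T.isAdjArc
  card_bag_le : ∀ i, #(D.bag i) ≤ T.width + 1

variable {ι ι' : Type*} {D : RootedTreeDecomposition (Finset V) ι}

theorem IsDecomposition.congr (hD : T.IsDecomposition D) (e : ι ≃ ι') :
    T.IsDecomposition (D.congr e) where
  labels_subset_bag_root := by
    simpa [RootedTreeDecomposition.congr] using hD.labels_subset_bag_root
  bag_subset_allLabels i := hD.bag_subset_allLabels (e.symm i)
  exists_mem_bag S hS := let ⟨i, hi⟩ := hD.exists_mem_bag S hS; ⟨e i, by simpa using hi⟩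
  covers_isChild := hD.covers_isChild.congr e
  covers_isAdjArc := hD.covers_isAdjArc.congr e
  card_bag_le i := hD.card_bag_le (e.symm i)

theorem IsDecomposition.covers_repAdj (hD : T.IsDecomposition D) : D.Covers (repAdj T) := by
  rintro A B ⟨-, h | h | h | h⟩
  exacts [hD.covers_isChild A B h, hD.covers_isChild.flip A B h, hD.covers_isAdjArc A B h,
    hD.covers_isAdjArc.flip A B h]

def HasDecomposition (T : SCD V) : Prop :=
  ∃ (ι : Type) (_ : Finite ι) (D : RootedTreeDecomposition (Finset V) ι), T.IsDecomposition D

theorem hasDecomposition_leaf (v : V) : (leaf v).HasDecomposition :=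
  ⟨Unit, inferInstance, single (leaf v).labels, subset_rfl, fun _ => subset_rfl,
    fun _ hS => ⟨(), hS⟩, fun _ _ h => h.elim, fun _ _ h => h.elim,
    fun _ => (card_labels_le_width _).trans (Nat.le_succ _)⟩

theorem HasDecomposition.addAdj (h₁ : S₁ ∈ t.labels) (h₂ : S₂ ∈ t.labels) :
    t.HasDecomposition → (t.addAdj S₁ S₂).HasDecomposition
  | ⟨ι, hι, D, hD⟩ => ⟨ι, hι, D,
    { hD with
      covers_isAdjArc := fun A B h => h.elim (hD.covers_isAdjArc A B) fun ⟨hA, hB⟩ =>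
        ⟨D.root, hA ▸ hD.labels_subset_bag_root h₁, hB ▸ hD.labels_subset_bag_root h₂⟩ }⟩

theorem HasDecomposition.addVertex (ht : t.WF) (hv : v ∉ t.verts) :
    t.HasDecomposition → (t.addVertex v).HasDecomposition := by
  rintro ⟨ι, _, D, hD⟩
  have hfresh : {v} ∉ t.allLabels := fun h =>
    hv (ht.subset_verts_of_mem_allLabels h (mem_singleton_self v))
  have hs : ∀ S ∈ t.labels ∪ {{v}}, ∀ i, S ∈ D.bag i → S ∈ D.bag D.root := by
    simp only [mem_union, mem_singleton]
    rintro S (hS | rfl) i hi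
    exacts [hD.labels_subset_bag_root hS, absurd (hD.bag_subset_allLabels i hi) hfresh]
  refine ⟨_, inferInstance, D.extend _ hs, subset_rfl, ?_, ?_,
    hD.covers_isChild.glue_right _, hD.covers_isAdjArc.glue_right _, ?_⟩
  · rintro (_ | i)
    exacts [union_subset_union t.labels_subset_allLabels subset_rfl,
      (hD.bag_subset_allLabels i).trans subset_union_left]
  · simp only [allLabels, mem_union, mem_singleton]
    rintro S (hS | rfl)
    · obtain ⟨i, hi⟩ := hD.exists_mem_bag S hS
      exact ⟨.inr i, hi⟩
    · exact ⟨.inl (), mem_union_right _ (mem_singleton_self _)⟩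
  · rintro (_ | i)
    · exact (card_labels_le_width (t.addVertex v)).trans (Nat.le_succ _)
    · exact (hD.card_bag_le i).trans (Nat.succ_le_succ (le_max_left _ _))

theorem HasDecomposition.unite (ht : t.WF) (h₁ : S₁ ∈ t.labels) (h₂ : S₂ ∈ t.labels)
    (h₁₂ : S₁ ≠ S₂) : t.HasDecomposition → (t.unite S₁ S₂).HasDecomposition := by
  rintro ⟨ι, _, D, hD⟩
  have hfresh := ht.union_notMem_allLabels h₁ h₂ h₁₂
  have hs : ∀ S ∈ t.labels ∪ {S₁ ∪ S₂}, ∀ i, S ∈ D.bag i → S ∈ D.bag D.root := by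
    simp only [mem_union, mem_singleton]
    rintro S (hS | rfl) i hi
    exacts [hD.labels_subset_bag_root hS, absurd (hD.bag_subset_allLabels i hi) hfresh]
  have hnew : S₁ ∪ S₂ ∈ t.labels ∪ {S₁ ∪ S₂} := mem_union_right _ (mem_singleton_self _)
  refine ⟨_, inferInstance, D.extend _ hs, union_subset_union sdiff_subset subset_rfl, ?_, ?_,
    ?_, hD.covers_isAdjArc.glue_right _, ?_⟩
  · rintro (_ | i)
    exacts [union_subset_union t.labels_subset_allLabels subset_rfl,
      (hD.bag_subset_allLabels i).trans subset_union_left]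
  · simp only [allLabels, mem_union, mem_singleton]
    rintro S (hS | rfl)
    · obtain ⟨i, hi⟩ := hD.exists_mem_bag S hS
      exact ⟨.inr i, hi⟩
    · exact ⟨.inl (), hnew⟩
  · rintro A B (h | ⟨hA, rfl⟩)
    · exact hD.covers_isChild.glue_right _ A B h
    · refine ⟨.inl (), mem_union_left _ ?_, hnew⟩
      rcases hA with rfl | rfl
      exacts [h₁, h₂]
  · rintro (_ | i)
    · calc #(t.labels ∪ {S₁ ∪ S₂}) ≤ #t.labels + 1 := card_union_le _ _
        _ ≤ (t.unite S₁ S₂).width + 1 := by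
          gcongr; exact t.card_labels_le_width.trans (le_max_left _ _)
    · exact (hD.card_bag_le i).trans (Nat.succ_le_succ (le_max_left _ _))

theorem HasDecomposition.union (hl : l.WF) (hr : r.WF) (hlr : Disjoint l.verts r.verts) :
    l.HasDecomposition → r.HasDecomposition → (l.union r).HasDecomposition := by
  rintro ⟨ι₁, _, D₁, hD₁⟩ ⟨ι₂, _, D₂, hD₂⟩
  have hsep {S} (h₁ : S ∈ l.allLabels) (h₂ : S ∈ r.allLabels) : False :=
    disjoint_left.mp (hl.disjoint_allLabels hr hlr) h₁ h₂
  have hs₁ : ∀ S ∈ l.labels ∪ r.labels, ∀ i, S ∈ D₁.bag i → S ∈ D₁.bag D₁.root := by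
    intro S hS i hi
    have hSl := hD₁.bag_subset_allLabels i hi
    rcases mem_union.mp hS with hS | hS
    exacts [hD₁.labels_subset_bag_root hS, (hsep hSl (r.labels_subset_allLabels hS)).elim]
  let D := D₁.extend (l.labels ∪ r.labels) hs₁
  have hs₂ : ∀ S o j, S ∈ D.bag o → S ∈ D₂.bag j → S ∈ D.bag D.root ∧ S ∈ D₂.bag D₂.root := by
    intro S o j ho hj
    have hSr := hD₂.bag_subset_allLabels j hj
    rcases o with _ | i
    · refine ⟨ho, ?_⟩
      rcases mem_union.mp ho with hS | hS
      exacts [(hsep (l.labels_subset_allLabels hS) hSr).elim, hD₂.labels_subset_bag_root hS]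
    · exact (hsep (hD₁.bag_subset_allLabels i ho) hSr).elim
  refine ⟨_, inferInstance, D.glue D₂ hs₂, subset_rfl, ?_, ?_, ?_, ?_, ?_⟩
  · rintro ((_ | i) | j)
    exacts [union_subset_union l.labels_subset_allLabels r.labels_subset_allLabels,
      (hD₁.bag_subset_allLabels i).trans subset_union_left,
      (hD₂.bag_subset_allLabels j).trans subset_union_right]
  · rintro S hS
    rcases mem_union.mp hS with hS | hS
    · obtain ⟨i, hi⟩ := hD₁.exists_mem_bag S hS
      exact ⟨.inl (.inr i), hi⟩
    · obtain ⟨j, hj⟩ := hD₂.exists_mem_bag S hS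
      exact ⟨.inr j, hj⟩
  · rintro A B (h | h)
    exacts [(hD₁.covers_isChild.glue_right _).glue_left _ A B h,
      hD₂.covers_isChild.glue_right _ A B h]
  · rintro A B (h | h)
    exacts [(hD₁.covers_isAdjArc.glue_right _).glue_left _ A B h,
      hD₂.covers_isAdjArc.glue_right _ A B h]
  · have hw₁ : l.width ≤ (l.union r).width := (le_max_left _ _).trans (le_max_left _ _)
    have hw₂ : r.width ≤ (l.union r).width := (le_max_right _ _).trans (le_max_left _ _)
    rintro ((_ | i) | j)
    exacts [(card_labels_le_width (l.union r)).trans (Nat.le_succ _),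
      (hD₁.card_bag_le i).trans (Nat.succ_le_succ hw₁),
      (hD₂.card_bag_le j).trans (Nat.succ_le_succ hw₂)]

theorem WF.hasDecomposition (hT : T.WF) : T.HasDecomposition := by
  induction T with
  | leaf v => exact hasDecomposition_leaf v
  | union l r ihl ihr => exact .union hT.1 hT.2.1 hT.2.2 (ihl hT.1) (ihr hT.2.1)
  | addVertex t v ih => exact .addVertex hT.1 hT.2 (ih hT.1)
  | unite t S₁ S₂ ih => exact .unite hT.1 hT.2.1 hT.2.2.1 hT.2.2.2 (ih hT.1)
  | addAdj t S₁ S₂ ih => exact .addAdj hT.2.1 hT.2.2.1 (ih hT.1)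

end SCD

/-- The representation graph of a simplified clique decomposition of width `k`
has treewidth at most `k`: there is a tree decomposition (a tree `G` with bags
of labels covering all vertices and edges of `H`, the bags containing any fixed
label inducing a connected subtree) all of whose bags have at most `k + 1`
elements. -/
theorem representation_graph_treewidth (T : SCD V) (hWF : T.WF) (k : ℕ)
    (hw : T.width ≤ k) :
    ∃ (N : ℕ) (G : SimpleGraph (Fin N)) (Bag : Fin N → Finset (Finset V)),
      G.IsTree ∧
      (∀ S ∈ T.allLabels, ∃ i, S ∈ Bag i) ∧
      (∀ A B : Finset V, repAdj T A B → ∃ i, A ∈ Bag i ∧ B ∈ Bag i) ∧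
      (∀ S : Finset V, (G.induce {i | S ∈ Bag i}).Preconnected) ∧
      (∀ i, (Bag i).card ≤ k + 1) := by
  obtain ⟨ι, _, D, hD⟩ := hWF.hasDecomposition
  obtain ⟨N, ⟨e⟩⟩ := Finite.exists_equiv_fin ι
  have hDN := hD.congr e
  exact ⟨N, (D.congr e).graph, (D.congr e).bag, (D.congr e).isTree, hDN.exists_mem_bag,
    hDN.covers_repAdj, (D.congr e).runningIntersection,
    fun i => (hDN.card_bag_le i).trans (Nat.succ_le_succ hw)⟩
end

section
/- Let (T,𝐁) be a minimal tree decomposition of the incidence graph of a CNF F (no element can be removed from any bag without violating the decomposition properties). Let t' be a node with two children t₁, t₂ rooting subtrees T₁, T₂, and let C be a clause contained in both a bag of T₁ and a bag of T₂ (i.e., C ∈ Cl(t₁) ∩ Cl(t₂)). Then C contains an occurrence of some variable in Var(T₁) \ Var(t') and an occurrence of some variable in Var(T₂) \ Var(t'). -/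
/-!
Since `c` lies in the bags of two children of `t'`, connectedness puts it in the bag of `t'` as
well. Inside the subtree of `t₁` we find a node `s ≠ t'` whose bag contains `c` and from which
`c` can be removed without disconnecting the nodes containing `c`: a node of that set with no
child in it, or, when the subtree of `t₁` is the whole tree, any node other than `t'` found by
counting. By minimality the removal must then destroy an incidence of `c`, i.e. some variable `x`
of `c` meets `c` only in the bag of `s`. So `x` lies in the subtree of `t₁` and not in the bag of
`t'`, which contains `c`.
-/

variable {C V : Type}

/-- `Desc n parent t i`: node `i` belongs to the subtree rooted at `t` of the
rooted tree given by the parent function. -/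
def Desc (n : ℕ) (parent : Fin n → Fin n) (t i : Fin n) : Prop :=
  ∃ k : ℕ, parent^[k] i = t

/-- `Bag` is a tree decomposition of the incidence graph of a CNF whose
clause–variable incidences are given by `occ`, over the rooted tree with `n`
nodes given by `parent`: every clause and every variable appears in some bag,
every incidence is witnessed in a common bag, and for each element the set of
nodes containing it is connected (it has a top node `m`, and is closed under
taking parents below `m`). -/
def IsTD (n : ℕ) (parent : Fin n → Fin n) (occ : C → V → Prop)
    (Bag : Fin n → Finset (C ⊕ V)) : Prop :=
  (∀ c : C, ∃ i, Sum.inl c ∈ Bag i) ∧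
  (∀ v : V, ∃ i, Sum.inr v ∈ Bag i) ∧
  (∀ (c : C) (v : V), occ c v → ∃ i, Sum.inl c ∈ Bag i ∧ Sum.inr v ∈ Bag i) ∧
  (∀ x : C ⊕ V, (∀ i, x ∉ Bag i) ∨
    ∃ m, x ∈ Bag m ∧ ∀ i, x ∈ Bag i → i = m ∨ x ∈ Bag (parent i))

open Finset

section HasTop

variable {α : Type*} (parent : α → α)

/-- `S` is connected in the tree given by `parent`, in the sense of `IsTD`. -/
def HasTop (S : Finset α) : Prop :=
  ∃ m ∈ S, ∀ i ∈ S, i = m ∨ parent i ∈ S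

variable {parent}

lemma hasTop_filter_iff [Fintype α] {P : α → Prop} [DecidablePred P] :
    HasTop parent (univ.filter P) ↔ ∃ m, P m ∧ ∀ i, P i → i = m ∨ P (parent i) := by
  simp [HasTop]

section DecidableEq

variable [DecidableEq α]

lemma hasTop_erase_of_forall_parent_ne {S : Finset α} {m s u : α} (hm : m ∈ S)
    (htop : ∀ i ∈ S, i = m ∨ parent i ∈ S) (hs : ∀ i ∈ S, i ≠ s → i ≠ m → parent i ≠ s)
    (hu : u ∈ S) (hus : u ≠ s) : HasTop parent (S.erase s) := by
  by_cases hsm : s = m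
  · subst hsm
    refine ⟨u, mem_erase.2 ⟨hus, hu⟩, fun i hi => ?_⟩
    obtain ⟨his, hiS⟩ := mem_erase.1 hi
    exact Or.inr (mem_erase.2 ⟨hs i hiS his his, (htop i hiS).resolve_left his⟩)
  · refine ⟨m, mem_erase.2 ⟨Ne.symm hsm, hm⟩, fun i hi => ?_⟩
    obtain ⟨his, hiS⟩ := mem_erase.1 hi
    by_cases him : i = m
    · exact Or.inl him
    · exact Or.inr (mem_erase.2 ⟨hs i hiS his him, (htop i hiS).resolve_left him⟩)

lemma exists_mem_forall_parent_ne {A : Finset α} {t : α} (ht : t ∈ A) (hpt : parent t ∉ A) :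
    ∃ s ∈ A, ∀ i ∈ A, parent i ≠ s := by
  by_contra! h
  have hsub : A ⊆ (A.erase t).image parent := by
    intro s hs
    obtain ⟨i, hi, rfl⟩ := h s hs
    exact mem_image_of_mem parent (mem_erase.2 ⟨fun hit => hpt (hit ▸ hs), hi⟩)
  have hcard := (card_le_card hsub).trans card_image_le
  rw [card_erase_of_mem ht] at hcard
  have := card_pos.2 ⟨t, ht⟩
  omega

lemma HasTop.exists_ne_hasTop_erase {S : Finset α} (hS : HasTop parent S) {u v : α}
    (hu : u ∈ S) (hv : v ∈ S) (hvu : parent v = u) (hne : v ≠ u) :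
    ∃ s ∈ S, s ≠ u ∧ HasTop parent (S.erase s) := by
  -- If `v` is the top, then `S` is closed under `parent` and `u` is a top as well.
  obtain ⟨m, hm, hmv, htop⟩ : ∃ m ∈ S, m ≠ v ∧ ∀ i ∈ S, i = m ∨ parent i ∈ S := by
    obtain ⟨m, hm, htop⟩ := hS
    by_cases hmv : m = v
    · refine ⟨u, hu, hne.symm, fun i hi => Or.inr ?_⟩
      rcases htop i hi with rfl | h
      · rwa [hmv, hvu]
      · exact h
    · exact ⟨m, hm, hmv, htop⟩
  by_contra! hno
  -- Otherwise every node but `u` has a child other than `m` and `v` in `S`: too many parents.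
  have hsub : S.erase u ⊆ ((S.erase m).erase v).image parent := by
    intro s hs
    obtain ⟨hsu, hsS⟩ := mem_erase.1 hs
    by_contra hchild
    refine hno s hsS hsu (hasTop_erase_of_forall_parent_ne hm htop (fun i hi his him hpi => ?_)
      hu hsu.symm)
    refine hchild (mem_image.2 ⟨i, mem_erase.2 ⟨?_, mem_erase.2 ⟨him, hi⟩⟩, hpi⟩)
    rintro rfl
    exact hsu (hpi ▸ hvu)
  have hcard := (card_le_card hsub).trans card_image_le
  rw [card_erase_of_mem hu, card_erase_of_mem (mem_erase.2 ⟨hmv.symm, hv⟩),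
    card_erase_of_mem hm] at hcard
  have := card_pos.2 ⟨v, mem_erase.2 ⟨hne, hv⟩⟩
  rw [card_erase_of_mem hu] at this
  omega

end DecidableEq

end HasTop

section Desc

variable {n : ℕ} {parent : Fin n → Fin n}

lemma Desc.refl (t : Fin n) : Desc n parent t t :=
  ⟨0, rfl⟩

lemma Desc.trans {t s i : Fin n} (hts : Desc n parent t s) (hsi : Desc n parent s i) :
    Desc n parent t i := by
  obtain ⟨k, hk⟩ := hts
  obtain ⟨j, hj⟩ := hsi
  exact ⟨k + j, by rw [Function.iterate_add_apply, hj, hk]⟩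

lemma Desc.of_parent {t i : Fin n} (h : Desc n parent t (parent i)) : Desc n parent t i := by
  obtain ⟨k, hk⟩ := h
  exact ⟨k + 1, by rw [Function.iterate_succ_apply, hk]⟩

variable (hpar : ∀ i : Fin n, (parent i : ℕ) < (i : ℕ) ∨ (i : ℕ) = 0)
include hpar

lemma desc_zero [NeZero n] (i : Fin n) : Desc n parent 0 i := by
  induction i using WellFoundedLT.induction with
  | _ i ih =>
    rcases hpar i with h | h
    · exact (ih (parent i) h).of_parent
    · exact ⟨0, Fin.ext (by simp [h])⟩

lemma val_le_of_desc [NeZero n] {t i : Fin n} (h0 : ¬ Desc n parent t 0) (h : Desc n parent t i) :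
    (t : ℕ) ≤ i := by
  obtain ⟨k, hk⟩ := h
  induction k generalizing i with
  | zero => exact le_of_eq (congrArg Fin.val hk).symm
  | succ k ih =>
    rw [Function.iterate_succ_apply] at hk
    rcases hpar i with h | h
    · exact (ih hk).trans h.le
    · have hi : i = 0 := Fin.ext (by simp [h])
      exact absurd ⟨k + 1, by rwa [Function.iterate_succ_apply, ← hi]⟩ h0

omit hpar in
lemma exists_desc_hasTop_erase_of_not_desc {S : Finset (Fin n)} (hS : HasTop parent S)
    {t' t₁ : Fin n} (ht' : t' ∈ S) (ht₁ : t₁ ∈ S) (hp : parent t₁ = t')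
    (hD : ¬ Desc n parent t₁ t') :
    ∃ s ∈ S, Desc n parent t₁ s ∧ s ≠ t' ∧ HasTop parent (S.erase s) := by
  classical
  obtain ⟨m, hm, htop⟩ := hS
  obtain ⟨s, hsA, hs⟩ := exists_mem_forall_parent_ne (parent := parent)
    (A := S.filter (Desc n parent t₁)) (mem_filter.2 ⟨ht₁, Desc.refl t₁⟩)
    (by rw [hp, mem_filter]; exact fun h => hD h.2)
  obtain ⟨hsS, hsD⟩ := mem_filter.1 hsA
  have hst' : s ≠ t' := fun h => hD (h ▸ hsD)
  refine ⟨s, hsS, hsD, hst', hasTop_erase_of_forall_parent_ne hm htop ?_ ht' hst'.symm⟩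
  intro i hi _ _ hpi
  exact hs i (mem_filter.2 ⟨hi, (hpi ▸ hsD : Desc n parent t₁ (parent i)).of_parent⟩) hpi

lemma exists_desc_hasTop_erase [NeZero n] {S : Finset (Fin n)} (hS : HasTop parent S)
    {t' t₁ : Fin n} (ht' : t' ∈ S) (ht₁ : t₁ ∈ S) (hp : parent t₁ = t') (hne : t₁ ≠ t') :
    ∃ s ∈ S, Desc n parent t₁ s ∧ s ≠ t' ∧ HasTop parent (S.erase s) := by
  -- `parent 0` is unconstrained, so the subtree of `t₁` may be everything (a cycle through `0`).
  by_cases h0 : Desc n parent t₁ 0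
  · obtain ⟨s, hs, hst', hS'⟩ := hS.exists_ne_hasTop_erase ht' ht₁ hp hne
    exact ⟨s, hs, h0.trans (desc_zero hpar s), hst', hS'⟩
  · refine exists_desc_hasTop_erase_of_not_desc hS ht' ht₁ hp fun hD => ?_
    have hle := val_le_of_desc hpar h0 hD
    rcases hpar t₁ with h | h
    · rw [hp] at h
      omega
    · exact h0 ⟨0, Fin.ext (by simp [h])⟩

end Desc

section IsTD

variable {n : ℕ} {parent : Fin n → Fin n} {occ : C → V → Prop} {Bag : Fin n → Finset (C ⊕ V)}

lemma IsTD.hasTop_filter [DecidableEq C] [DecidableEq V] (htd : IsTD n parent occ Bag)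
    {x : C ⊕ V} {t : Fin n} (hx : x ∈ Bag t) : HasTop parent (univ.filter (x ∈ Bag ·)) :=
  hasTop_filter_iff.2 ((htd.2.2.2 x).resolve_left fun h => h t hx)

lemma IsTD.mem_of_mem_of_mem (htd : IsTD n parent occ Bag) {x : C ⊕ V} {t' t₁ t₂ : Fin n}
    (hp₁ : parent t₁ = t') (hp₂ : parent t₂ = t') (h12 : t₁ ≠ t₂) (h₁ : x ∈ Bag t₁)
    (h₂ : x ∈ Bag t₂) : x ∈ Bag t' := by
  obtain ⟨m, -, htop⟩ := (htd.2.2.2 x).resolve_left fun h => h t₁ h₁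
  rcases htop t₁ h₁ with rfl | h
  · rcases htop t₂ h₂ with rfl | h
    · exact absurd rfl h12
    · rwa [hp₂] at h
  · rwa [hp₁] at h

lemma mem_update_erase_iff [DecidableEq C] [DecidableEq V] {s i : Fin n} {x y : C ⊕ V} :
    y ∈ Function.update Bag s ((Bag s).erase x) i ↔ y ∈ Bag i ∧ (i = s → y ≠ x) := by
  by_cases his : i = s
  · subst his
    simp [and_comm]
  · simp [his]

lemma IsTD.exists_occ_of_not_isTD_update [DecidableEq C] [DecidableEq V]
    (htd : IsTD n parent occ Bag) {s t : Fin n} {c : C}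
    (hmin : ¬ IsTD n parent occ (Function.update Bag s ((Bag s).erase (Sum.inl c))))
    (hct : Sum.inl c ∈ Bag t) (hts : t ≠ s)
    (hS : HasTop parent ((univ.filter (Sum.inl c ∈ Bag ·)).erase s)) :
    ∃ x, occ c x ∧ ∀ i, Sum.inl c ∈ Bag i → Sum.inr x ∈ Bag i → i = s := by
  by_contra! h
  obtain ⟨hcl, hvar, hinc, hconn⟩ := htd
  apply hmin
  simp only [IsTD, mem_update_erase_iff]
  refine ⟨fun c' => ?_, fun v => ?_, fun c' v hv => ?_, fun y => ?_⟩
  · by_cases hc' : c' = c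
    · exact ⟨t, hc' ▸ hct, fun h => absurd h hts⟩
    · obtain ⟨i, hi⟩ := hcl c'
      exact ⟨i, hi, fun _ h => hc' (Sum.inl_injective h)⟩
  · obtain ⟨i, hi⟩ := hvar v
    exact ⟨i, hi, fun _ => Sum.inr_ne_inl⟩
  · by_cases hc' : c' = c
    · subst hc'
      obtain ⟨i, hci, hvi, his⟩ := h v hv
      exact ⟨i, ⟨hci, fun h => absurd h his⟩, hvi, fun _ => Sum.inr_ne_inl⟩
    · obtain ⟨i, hci, hvi⟩ := hinc c' v hv
      exact ⟨i, ⟨hci, fun _ h => hc' (Sum.inl_injective h)⟩, hvi, fun _ => Sum.inr_ne_inl⟩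
  · by_cases hy : y = Sum.inl c
    · subst hy
      obtain ⟨m, hm, htop⟩ := hS
      simp only [mem_erase, mem_filter, mem_univ, true_and] at hm htop
      refine Or.inr ⟨m, ⟨hm.2, fun h => absurd h hm.1⟩, fun i hi => ?_⟩
      exact (htop i ⟨fun h => hi.2 h rfl, hi.1⟩).imp_right fun h => ⟨h.2, fun h' => absurd h' h.1⟩
    · simpa [hy] using hconn y

end IsTD

lemma exists_private_var_of_child [DecidableEq C] [DecidableEq V] {n : ℕ} [NeZero n]
    {parent : Fin n → Fin n} (hpar : ∀ i : Fin n, (parent i : ℕ) < (i : ℕ) ∨ (i : ℕ) = 0)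
    {occ : C → V → Prop} {Bag : Fin n → Finset (C ⊕ V)} (htd : IsTD n parent occ Bag)
    (hmin : ∀ (i : Fin n) (x : C ⊕ V), x ∈ Bag i →
      ¬ IsTD n parent occ (Function.update Bag i ((Bag i).erase x)))
    {t' t₁ : Fin n} (hpt₁ : parent t₁ = t') (hne₁ : t₁ ≠ t') {c : C}
    (hc₁ : Sum.inl c ∈ Bag t₁) (hct' : Sum.inl c ∈ Bag t') :
    ∃ x : V, occ c x ∧ (∃ i, Desc n parent t₁ i ∧ Sum.inr x ∈ Bag i) ∧
      Sum.inr x ∉ Bag t' := by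
  have hmem : ∀ i, i ∈ univ.filter (Sum.inl c ∈ Bag ·) ↔ Sum.inl c ∈ Bag i := by simp
  obtain ⟨s, hsS, hsD, hst', hS'⟩ := exists_desc_hasTop_erase hpar (htd.hasTop_filter hc₁)
    ((hmem t').2 hct') ((hmem t₁).2 hc₁) hpt₁ hne₁
  obtain ⟨x, hocc, hx⟩ :=
    htd.exists_occ_of_not_isTD_update (hmin s _ ((hmem s).1 hsS)) hct' hst'.symm hS'
  obtain ⟨i, hci, hxi⟩ := htd.2.2.1 c x hocc
  exact ⟨x, hocc, ⟨s, hsD, hx i hci hxi ▸ hxi⟩, fun hxt' => hst' (hx t' hct' hxt').symm⟩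

/-- In a minimal tree decomposition of the incidence graph of a CNF (no element
can be removed from any bag), if a clause `c` appears in the bags of two
distinct children `t₁, t₂` of a node `t'`, then `c` contains an occurrence of
some variable in `Var(T₁) \ Var(t')` and an occurrence of some variable in
`Var(T₂) \ Var(t')`, where `T₁, T₂` are the subtrees rooted at `t₁, t₂`. -/
theorem shared_clause_has_private_variables [DecidableEq C] [DecidableEq V]
    (n : ℕ) (hn : 0 < n) (parent : Fin n → Fin n)
    (hpar : ∀ i : Fin n, (parent i : ℕ) < (i : ℕ) ∨ (i : ℕ) = 0)
    (occ : C → V → Prop) (Bag : Fin n → Finset (C ⊕ V))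
    (htd : IsTD n parent occ Bag)
    (hmin : ∀ (i : Fin n) (x : C ⊕ V), x ∈ Bag i →
      ¬ IsTD n parent occ (Function.update Bag i ((Bag i).erase x)))
    (t' t₁ t₂ : Fin n)
    (hpt₁ : parent t₁ = t') (hne₁ : t₁ ≠ t')
    (hpt₂ : parent t₂ = t') (hne₂ : t₂ ≠ t') (h12 : t₁ ≠ t₂)
    (c : C) (hc₁ : Sum.inl c ∈ Bag t₁) (hc₂ : Sum.inl c ∈ Bag t₂) :
    (∃ x : V, occ c x ∧ (∃ i, Desc n parent t₁ i ∧ Sum.inr x ∈ Bag i) ∧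
      Sum.inr x ∉ Bag t') ∧
    (∃ x : V, occ c x ∧ (∃ i, Desc n parent t₂ i ∧ Sum.inr x ∈ Bag i) ∧
      Sum.inr x ∉ Bag t') := by
  have : NeZero n := ⟨hn.ne'⟩
  have hct' : Sum.inl c ∈ Bag t' := htd.mem_of_mem_of_mem hpt₁ hpt₂ h12 hc₁ hc₂
  exact ⟨exists_private_var_of_child hpar htd hmin hpt₁ hne₁ hc₁ hct',
    exists_private_var_of_child hpar htd hmin hpt₂ hne₂ hc₂ hct'⟩
end
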